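/- Let C = (1, c₂, ..., cₙ) with n ≥ 2 and suppose the subsystem (1, c₂, ..., c_{n-1}) is canonical. Then C is canonical if and only if opt_C(m·c_{n-1}) = grd_C(m·c_{n-1}), where m = ⌈cₙ / c_{n-1}⌉. -/

import Mathlib

open Finset

/-- `x` is a representation of value `v` in the coin system `c 1, …, c n`. -/
def IsRepr (n : ℕ) (c : ℕ → ℕ) (v : ℕ) (x : ℕ → ℕ) : Prop :=
  ∑ i ∈ Finset.Icc 1 n, c i * x i = v

/-- Minimum number of coins over all representations of `v`. -/
noncomputable def opt (n : ℕ) (c : ℕ → ℕ) (v : ℕ) : ℕ :=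
  sInf {k | ∃ x : ℕ → ℕ, IsRepr n c v x ∧ ∑ i ∈ Finset.Icc 1 n, x i = k}

/-- Number of coins used by the greedy algorithm to pay `v`. -/
def grd (n : ℕ) (c : ℕ → ℕ) (v : ℕ) : ℕ :=
  if hv : v = 0 then 0
  else
    let m := ((Finset.Icc 1 n).filter (fun i => c i ≤ v)).sup c
    if hm : 0 < m then grd n c (v - m) + 1 else 0
termination_by v
decreasing_by omega

/-- The system is canonical: greedy is optimal for every positive value. -/
def Canonical (n : ℕ) (c : ℕ → ℕ) : Prop :=
  ∀ v, 0 < v → opt n c v = grd n c v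

/-- `w` is a counterexample to the system. -/
def IsCex (n : ℕ) (c : ℕ → ℕ) (w : ℕ) : Prop :=
  0 < w ∧ opt n c w < grd n c w

/-- `w` is the minimum counterexample to the system. -/
def MinCex (n : ℕ) (c : ℕ → ℕ) (w : ℕ) : Prop :=
  IsCex n c w ∧ ∀ u, IsCex n c u → w ≤ u

/-- A (currency) system: first coin is `1` and coins strictly increase. -/
def IsSystem (n : ℕ) (c : ℕ → ℕ) : Prop :=
  c 1 = 1 ∧ StrictMonoOn c (Set.Icc 1 n)

/-!
Write `a = c (n - 1)`, `b = c n`, `m = ⌈b / a⌉` and `s = m a - b < a`. Greedy pays `m a` with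
one `b` followed by the greedy payment of `s`, while `m` coins `a` also pay it; so greedy optimality
at `m a` gives `grd s < m`. From this and the canonicity of the subsystem, induction on `v ≥ b` shows
`opt_n (v - b) < opt_{n-1} v`: greedy for the subsystem starts with a coin `a`, and if `v - a < b`
the remainder `r = v - b` is compared with `s`, writing `v - a` as `(m - 2) a + (a - s + r)` if
`r < s` and as `(m - 1) a + (r - s)` otherwise. Hence every `v ≥ b` has an optimal representation
using the coin `b`, which is the greedy choice, and canonicity follows by induction on `v`.
-/

theorem sum_Icc_update_top (g : ℕ → ℕ → ℕ) (x : ℕ → ℕ) (k t : ℕ) :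
    ∑ i ∈ Icc 1 (k + 1), g i (Function.update x (k + 1) t i) =
      ∑ i ∈ Icc 1 k, g i (x i) + g (k + 1) t := by
  rw [sum_Icc_succ_top (by omega), Function.update_self]
  congr 1
  exact sum_congr rfl fun i hi => by
    rw [Function.update_of_ne (by simp only [mem_Icc] at hi; omega)]

theorem IsSystem.mono {n k : ℕ} {c : ℕ → ℕ} (h : IsSystem n c) (hkn : k ≤ n) : IsSystem k c :=
  ⟨h.1, h.2.mono (Set.Icc_subset_Icc_right hkn)⟩

theorem IsSystem.le_top {n : ℕ} {c : ℕ → ℕ} (h : IsSystem n c) :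
    ∀ i ∈ Icc 1 n, c i ≤ c n := fun i hi => by
  rw [mem_Icc] at hi
  exact h.2.monotoneOn ⟨hi.1, hi.2⟩ ⟨hi.1.trans hi.2, le_rfl⟩ hi.2

theorem top_coin_pos {N : ℕ} {c : ℕ → ℕ} (h1 : c 1 = 1) (hN : 1 ≤ N)
    (htop : ∀ i ∈ Icc 1 N, c i ≤ c N) : 0 < c N := by
  have := htop 1 (mem_Icc.2 ⟨le_rfl, hN⟩)
  omega

theorem le_ceil_div_mul_lt {a : ℕ} (b : ℕ) (ha : 0 < a) :
    b ≤ (b + a - 1) / a * a ∧ (b + a - 1) / a * a < b + a := by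
  have hlt := Nat.lt_div_mul_add (a := b + a - 1) ha
  have hle := Nat.div_mul_le_self (b + a - 1) a
  omega

section Greedy

variable {N k : ℕ} {c : ℕ → ℕ}

theorem grd_zero (N : ℕ) (c : ℕ → ℕ) : grd N c 0 = 0 := by
  rw [grd]; simp

theorem grd_eq_grd_sub_add_one (hN : 1 ≤ N) (htop : ∀ i ∈ Icc 1 N, c i ≤ c N) (hpos : 0 < c N)
    {v : ℕ} (hv : c N ≤ v) : grd N c v = grd N c (v - c N) + 1 := by
  have hsup : ((Icc 1 N).filter (fun i => c i ≤ v)).sup c = c N :=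
    le_antisymm (Finset.sup_le fun i hi => htop i (mem_filter.1 hi).1)
      (le_sup (mem_filter.2 ⟨mem_Icc.2 ⟨hN, le_rfl⟩, hv⟩))
  rw [grd]
  simp only [show v ≠ 0 by omega, dite_false, hsup, hpos, dite_true]

theorem grd_succ_of_lt {v : ℕ} (hv : v < c (k + 1)) : grd (k + 1) c v = grd k c v := by
  induction v using Nat.strong_induction_on with
  | _ v ih =>
    have hfilter :
        (Icc 1 (k + 1)).filter (fun i => c i ≤ v) = (Icc 1 k).filter (fun i => c i ≤ v) := by
      rw [← insert_Icc_right_eq_Icc_add_one (by omega), filter_insert, if_neg (by omega)]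
    rcases Nat.eq_zero_or_pos v with rfl | hv0
    · simp only [grd_zero]
    rw [grd, grd, hfilter]
    simp only [show v ≠ 0 by omega, dite_false]
    split_ifs with hpos
    · rw [ih _ (by omega) (by omega)]
    · rfl

theorem grd_mul_add (hN : 1 ≤ N) (htop : ∀ i ∈ Icc 1 N, c i ≤ c N) (hpos : 0 < c N) (j w : ℕ) :
    grd N c (j * c N + w) = j + grd N c w := by
  induction j with
  | zero => simp
  | succ j ih =>
    rw [grd_eq_grd_sub_add_one hN htop hpos (by rw [add_one_mul]; omega),
      show (j + 1) * c N + w - c N = j * c N + w by rw [add_one_mul]; omega, ih]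
    omega

end Greedy

section Optimal

variable {N k : ℕ} {c : ℕ → ℕ}

theorem opt_le {v : ℕ} {x : ℕ → ℕ} (hx : IsRepr N c v x) : opt N c v ≤ ∑ i ∈ Icc 1 N, x i :=
  Nat.sInf_le ⟨x, hx, rfl⟩

theorem opt_zero (N : ℕ) (c : ℕ → ℕ) : opt N c 0 = 0 :=
  Nat.le_zero.1 (by simpa using opt_le (N := N) (c := c) (x := 0) (by simp [IsRepr]))

theorem isRepr_single {j : ℕ} (hj : j ∈ Icc 1 N) (t : ℕ) :
    IsRepr N c (c j * t) (Pi.single j t) := by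
  rw [IsRepr, sum_eq_single_of_mem j hj fun i _ hij => by rw [Pi.single_eq_of_ne hij, mul_zero],
    Pi.single_eq_same]

theorem opt_mul_le {j : ℕ} (hj : j ∈ Icc 1 N) (t : ℕ) : opt N c (c j * t) ≤ t :=
  (opt_le (isRepr_single hj t)).trans_eq (by simp [sum_pi_single', hj])

theorem exists_isRepr_sum_eq_opt (h1 : c 1 = 1) (hN : 1 ≤ N) (v : ℕ) :
    ∃ x, IsRepr N c v x ∧ ∑ i ∈ Icc 1 N, x i = opt N c v := by
  have hrepr : IsRepr N c v (Pi.single 1 v) := by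
    simpa [h1] using isRepr_single (c := c) (mem_Icc.2 ⟨le_rfl, hN⟩) v
  exact Nat.sInf_mem (s := {k | ∃ x, IsRepr N c v x ∧ ∑ i ∈ Icc 1 N, x i = k}) ⟨_, _, hrepr, rfl⟩

theorem opt_add_le (h1 : c 1 = 1) (hN : 1 ≤ N) (u v : ℕ) :
    opt N c (u + v) ≤ opt N c u + opt N c v := by
  obtain ⟨x, hx, hxs⟩ := exists_isRepr_sum_eq_opt h1 hN u
  obtain ⟨y, hy, hys⟩ := exists_isRepr_sum_eq_opt h1 hN v
  have hxy : IsRepr N c (u + v) (x + y) := by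
    simp only [IsRepr, Pi.add_apply, Nat.mul_add, sum_add_distrib] at hx hy ⊢
    rw [hx, hy]
  calc opt N c (u + v) ≤ ∑ i ∈ Icc 1 N, (x + y) i := opt_le hxy
    _ = opt N c u + opt N c v := by rw [← hxs, ← hys, ← sum_add_distrib]; rfl

theorem opt_succ_le_opt_sub_add (h1 : c 1 = 1) (hk : 1 ≤ k) {v t : ℕ} (ht : c (k + 1) * t ≤ v) :
    opt (k + 1) c v ≤ opt k c (v - c (k + 1) * t) + t := by
  obtain ⟨x, hx, hxs⟩ := exists_isRepr_sum_eq_opt h1 hk (v - c (k + 1) * t)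
  have hrepr : IsRepr (k + 1) c v (Function.update x (k + 1) t) := by
    rw [IsRepr, sum_Icc_update_top (fun i y => c i * y)]
    rw [IsRepr] at hx
    omega
  calc opt (k + 1) c v ≤ _ := opt_le hrepr
    _ = opt k c (v - c (k + 1) * t) + t := by rw [sum_Icc_update_top (fun _ y => y), hxs]

theorem exists_opt_succ_eq (h1 : c 1 = 1) (hk : 1 ≤ k) (v : ℕ) :
    ∃ t, c (k + 1) * t ≤ v ∧ opt (k + 1) c v = opt k c (v - c (k + 1) * t) + t := by
  obtain ⟨x, hx, hxs⟩ := exists_isRepr_sum_eq_opt h1 (by omega : 1 ≤ k + 1) v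
  rw [IsRepr, sum_Icc_succ_top (by omega)] at hx
  rw [sum_Icc_succ_top (by omega)] at hxs
  have hrepr : IsRepr k c (v - c (k + 1) * x (k + 1)) x := by
    rw [IsRepr]
    omega
  refine ⟨x (k + 1), by omega, le_antisymm (opt_succ_le_opt_sub_add h1 hk (by omega)) ?_⟩
  have := opt_le hrepr
  omega

theorem opt_succ_le (h1 : c 1 = 1) (hk : 1 ≤ k) (v : ℕ) : opt (k + 1) c v ≤ opt k c v := by
  simpa using opt_succ_le_opt_sub_add (v := v) h1 hk (t := 0) (by simp)

theorem opt_succ_of_lt (h1 : c 1 = 1) (hk : 1 ≤ k) {v : ℕ} (hv : v < c (k + 1)) :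
    opt (k + 1) c v = opt k c v := by
  obtain ⟨t, ht, heq⟩ := exists_opt_succ_eq h1 hk v
  obtain rfl : t = 0 := by
    by_contra h
    have := Nat.le_mul_of_pos_right (c (k + 1)) (Nat.pos_of_ne_zero h)
    omega
  simpa using heq

theorem opt_succ_eq_min (h1 : c 1 = 1) (hk : 1 ≤ k) {v : ℕ} (hv : c (k + 1) ≤ v) :
    opt (k + 1) c v = min (opt k c v) (opt (k + 1) c (v - c (k + 1)) + 1) := by
  have hsplit : opt (k + 1) c v ≤ opt (k + 1) c (v - c (k + 1)) + 1 := by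
    have hadd := opt_add_le h1 (by omega : 1 ≤ k + 1) (v - c (k + 1)) (c (k + 1))
    have hcoin := opt_mul_le (N := k + 1) (c := c) (mem_Icc.2 ⟨by omega, le_rfl⟩) 1
    rw [Nat.sub_add_cancel hv] at hadd
    rw [mul_one] at hcoin
    omega
  refine le_antisymm (le_min (opt_succ_le h1 hk v) hsplit) ?_
  obtain ⟨t, ht, heq⟩ := exists_opt_succ_eq h1 hk v
  rcases t with _ | t
  · simp only [mul_zero, Nat.sub_zero, add_zero] at heq
    exact heq ▸ min_le_left _ _
  · have hrest := opt_succ_le_opt_sub_add h1 hk (v := v - c (k + 1)) (t := t)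
      (by rw [Nat.mul_add_one] at ht; omega)
    rw [Nat.sub_sub, add_comm (c (k + 1)), ← Nat.mul_add_one] at hrest
    omega

end Optimal

theorem Canonical.opt_eq_grd {N : ℕ} {c : ℕ → ℕ} (h : Canonical N c) (u : ℕ) :
    opt N c u = grd N c u := by
  rcases Nat.eq_zero_or_pos u with rfl | hu
  · rw [opt_zero, grd_zero]
  · exact h u hu

section OnePoint

variable {k : ℕ} {c : ℕ → ℕ}

theorem grd_lt_of_opt_mul_eq_grd (hk : 1 ≤ k) (htop : ∀ i ∈ Icc 1 (k + 1), c i ≤ c (k + 1))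
    (hpos : 0 < c (k + 1)) {m s : ℕ} (hs : c (k + 1) + s = m * c k) (hsb : s < c (k + 1))
    (hopt : opt (k + 1) c (m * c k) = grd (k + 1) c (m * c k)) : grd k c s < m :=
  calc grd k c s < grd (k + 1) c s + 1 := by rw [grd_succ_of_lt hsb]; omega
    _ = grd (k + 1) c (m * c k) := by
      rw [grd_eq_grd_sub_add_one (v := m * c k) (by omega) htop hpos (by omega), ← hs,
        Nat.add_sub_cancel_left]
    _ = opt (k + 1) c (m * c k) := hopt.symm
    _ ≤ m := mul_comm m (c k) ▸ opt_mul_le (mem_Icc.2 ⟨hk, by omega⟩) m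

theorem opt_le_opt_top_add_sub (h1 : c 1 = 1) (hk : 1 ≤ k) (htop : ∀ i ∈ Icc 1 k, c i ≤ c k)
    (hcan : ∀ u, opt k c u = grd k c u) (hab : c k < c (k + 1)) {m s : ℕ}
    (hs : c (k + 1) + s = m * c k) (hsa : s < c k) (hgrd : grd k c s < m) (r : ℕ) :
    opt k c r ≤ opt k c (c (k + 1) + r - c k) := by
  have ha := top_coin_pos h1 hk htop
  have hmul (j w : ℕ) : opt k c (j * c k + w) = j + opt k c w := by
    rw [hcan, hcan, grd_mul_add hk htop ha]
  rw [← hcan] at hgrd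
  obtain ⟨j, rfl⟩ : ∃ j, m = j + 2 := ⟨m - 2, by
    have : 1 < m := Nat.lt_of_mul_lt_mul_right (a := c k) (by omega)
    omega⟩
  have hs' : c (k + 1) + s = j * c k + c k + c k := by rw [hs]; ring
  rcases lt_or_ge r s with hrs | hrs
  · have hsplit := opt_add_le h1 hk (c k - s + r) s
    rw [show c k - s + r + s = 1 * c k + r by omega, hmul] at hsplit
    rw [show c (k + 1) + r - c k = j * c k + (c k - s + r) by omega, hmul]
    omega
  · have hsplit := opt_add_le h1 hk s (r - s)
    rw [Nat.add_sub_cancel' hrs] at hsplit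
    rw [show c (k + 1) + r - c k = (j + 1) * c k + (r - s) by rw [add_one_mul]; omega, hmul]
    omega

theorem opt_succ_sub_top_lt_opt (h1 : c 1 = 1) (hk : 1 ≤ k) (htop : ∀ i ∈ Icc 1 k, c i ≤ c k)
    (hcan : ∀ u, opt k c u = grd k c u) (hab : c k < c (k + 1)) {m s : ℕ}
    (hs : c (k + 1) + s = m * c k) (hsa : s < c k) (hgrd : grd k c s < m) {v : ℕ}
    (hv : c (k + 1) ≤ v) : opt (k + 1) c (v - c (k + 1)) < opt k c v := by
  have ha := top_coin_pos h1 hk htop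
  induction v using Nat.strong_induction_on with
  | _ v ih =>
    have hstep : opt k c v = opt k c (v - c k) + 1 := by
      rw [hcan, hcan, grd_eq_grd_sub_add_one hk htop ha (by omega)]
    suffices opt (k + 1) c (v - c (k + 1)) ≤ opt k c (v - c k) by omega
    by_cases hbig : c (k + 1) ≤ v - c k
    · calc opt (k + 1) c (v - c (k + 1))
          = opt (k + 1) c (c k * 1 + (v - c k - c (k + 1))) := by congr 1; omega
        _ ≤ opt (k + 1) c (c k * 1) + opt (k + 1) c (v - c k - c (k + 1)) :=
          opt_add_le h1 (by omega) _ _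
        _ ≤ 1 + opt (k + 1) c (v - c k - c (k + 1)) := by
          gcongr
          exact opt_mul_le (mem_Icc.2 ⟨hk, by omega⟩) 1
        _ ≤ opt k c (v - c k) := by
          have := ih (v - c k) (by omega) hbig
          omega
    · calc opt (k + 1) c (v - c (k + 1)) ≤ opt k c (v - c (k + 1)) := opt_succ_le h1 hk _
        _ ≤ opt k c (c (k + 1) + (v - c (k + 1)) - c k) :=
          opt_le_opt_top_add_sub h1 hk htop hcan hab hs hsa hgrd _
        _ = opt k c (v - c k) := by congr 1; omega

theorem canonical_succ_of_opt_sub_top_lt (h1 : c 1 = 1) (hk : 1 ≤ k)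
    (htop : ∀ i ∈ Icc 1 (k + 1), c i ≤ c (k + 1)) (hcan : ∀ u, opt k c u = grd k c u)
    (hlt : ∀ v, c (k + 1) ≤ v → opt (k + 1) c (v - c (k + 1)) < opt k c v) :
    Canonical (k + 1) c := by
  have hpos := top_coin_pos h1 (by omega) htop
  suffices ∀ v, opt (k + 1) c v = grd (k + 1) c v from fun v _ => this v
  intro v
  induction v using Nat.strong_induction_on with
  | _ v ih =>
    rcases lt_or_ge v (c (k + 1)) with hv | hv
    · rw [opt_succ_of_lt h1 hk hv, grd_succ_of_lt hv, hcan]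
    · rw [opt_succ_eq_min h1 hk hv, min_eq_right (hlt v hv), ih _ (by omega),
        grd_eq_grd_sub_add_one (by omega) htop hpos hv]

end OnePoint

/-- One-point theorem (opt = grd form). -/
theorem one_point_theorem_opt (n : ℕ) (c : ℕ → ℕ) (hn : 2 ≤ n)
    (hsys : IsSystem n c) (hsub : Canonical (n - 1) c)
    (m : ℕ) (hm : m = (c n + c (n - 1) - 1) / c (n - 1)) :
    Canonical n c ↔ opt n c (m * c (n - 1)) = grd n c (m * c (n - 1)) := by
  obtain ⟨k, rfl⟩ : ∃ k, n = k + 1 := ⟨n - 1, by omega⟩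
  simp only [Nat.add_sub_cancel] at hsub hm ⊢
  have hk : 1 ≤ k := by omega
  have htop : ∀ i ∈ Icc 1 k, c i ≤ c k := (hsys.mono k.le_succ).le_top
  have hab : c k < c (k + 1) := hsys.2 ⟨hk, by omega⟩ ⟨by omega, le_rfl⟩ (by omega)
  have ha := top_coin_pos hsys.1 hk htop
  obtain ⟨hlo, hhi⟩ := le_ceil_div_mul_lt (c (k + 1)) ha
  rw [← hm] at hlo hhi
  refine ⟨fun hcan => hcan _ (by omega), fun hopt => ?_⟩
  have hs : c (k + 1) + (m * c k - c (k + 1)) = m * c k := by omega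
  have hgrd := grd_lt_of_opt_mul_eq_grd hk hsys.le_top (by omega) hs (by omega) hopt
  exact canonical_succ_of_opt_sub_top_lt hsys.1 hk hsys.le_top hsub.opt_eq_grd fun v hv =>
    opt_succ_sub_top_lt_opt hsys.1 hk htop hsub.opt_eq_grd hab hs (by omega) hgrd hv
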